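/- For every even natural number N > 6, the restricted correlation sum over non-coprime decompositions satisfies the upper bound ∑_{1 ≤ n ≤ N−1, gcd(n, N−n) > 1} Υ(n) · Υ(N − n) ≤ (log N / log 2)² · ∑_{p prime, p ∣ N} ∑_{1 ≤ n ≤ N/p − 1} Λ₀(n) · Λ₀(N/p − n). -/

import Mathlib

/-
A term `Υ(n) Υ(N - n)` with `1 < gcd(n, N - n)` can only be nonzero when both `n` and
`N - n` have exactly two prime factors; then for the least prime factor `p` of the gcd,
`a = n / p` and `b = (N - n) / p` are primes with `a + b = N / p`. The term is at most
`log² N = (log N / log 2)² · log² 2 ≤ (log N / log 2)² · Λ₀(a) Λ₀(b)`, and `n ↦ (p, a)`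
is injective, so the terms are dominated by distinct nonnegative terms of the right-hand side.
-/

open scoped Classical
open Finset Real

/-- The master function `Υ`: `Υ(n) = log p` if `n = p²` for a prime `p` (note then
`p = √n`), `Υ(n) = log(p₁p₂)` if `n = p₁p₂` for distinct primes `p₁, p₂`, and
`Υ(n) = 0` otherwise. -/
noncomputable def Upsilon (n : ℕ) : ℝ :=
  if ∃ p : ℕ, p.Prime ∧ n = p ^ 2 then Real.log (Nat.sqrt n)
  else if ∃ p₁ p₂ : ℕ, p₁.Prime ∧ p₂.Prime ∧ p₁ ≠ p₂ ∧ n = p₁ * p₂ then Real.log n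
  else 0

/-- The truncated von Mangoldt function: `Λ₀(n) = log n` if `n` is prime, else `0`. -/
noncomputable def Lambda0 (n : ℕ) : ℝ := if n.Prime then Real.log n else 0

open scoped ArithmeticFunction.Omega
open ArithmeticFunction

theorem Finset.sum_comp_le_sum_of_injOn {ι κ M : Type*} [AddCommMonoid M] [PartialOrder M]
    [IsOrderedAddMonoid M] {s : Finset ι} {t : Finset κ} {e : ι → κ} {g : κ → M}
    (he : Set.InjOn e s) (hst : Set.MapsTo e s t) (hg : ∀ k ∈ t, 0 ≤ g k) :
    ∑ i ∈ s, g (e i) ≤ ∑ k ∈ t, g k := by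
  rw [← sum_image he]
  exact sum_le_sum_of_subset_of_nonneg (image_subset_iff.2 hst) fun k hk _ => hg k hk

lemma Lambda0_nonneg (n : ℕ) : 0 ≤ Lambda0 n := by
  unfold Lambda0
  split_ifs
  exacts [Real.log_natCast_nonneg n, le_rfl]

lemma Lambda0_of_prime {n : ℕ} (h : n.Prime) : Lambda0 n = Real.log n := if_pos h

lemma Upsilon_nonneg (n : ℕ) : 0 ≤ Upsilon n := by
  unfold Upsilon
  split_ifs
  exacts [Real.log_natCast_nonneg _, Real.log_natCast_nonneg n, le_rfl]

lemma Upsilon_le_log (n : ℕ) : Upsilon n ≤ Real.log n := by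
  unfold Upsilon
  split_ifs with hsq
  · obtain ⟨p, hp, rfl⟩ := hsq
    rw [Nat.sqrt_eq' p]
    exact Real.log_le_log (by exact_mod_cast hp.pos)
      (by exact_mod_cast Nat.le_self_pow two_ne_zero p)
  · exact le_rfl
  · exact Real.log_natCast_nonneg n

lemma Upsilon_le_log_of_le {n m : ℕ} (h : n ≤ m) : Upsilon n ≤ Real.log m := by
  rcases n.eq_zero_or_pos with rfl | hn
  · exact (Upsilon_le_log 0).trans (by simpa using Real.log_natCast_nonneg m)
  · exact (Upsilon_le_log n).trans (Real.log_le_log (by exact_mod_cast hn) (by exact_mod_cast h))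

lemma cardFactors_eq_two_of_Upsilon_ne_zero {n : ℕ} (h : Upsilon n ≠ 0) : Ω n = 2 := by
  unfold Upsilon at h
  split_ifs at h with hsq hsemi
  · obtain ⟨p, hp, rfl⟩ := hsq
    exact cardFactors_apply_prime_pow hp
  · obtain ⟨p, q, hp, hq, -, rfl⟩ := hsemi
    rw [cardFactors_mul hp.ne_zero hq.ne_zero, cardFactors_apply_prime hp,
      cardFactors_apply_prime hq]
  · exact absurd rfl h

lemma Nat.Prime.prime_of_Upsilon_mul_ne_zero {p a : ℕ} (hp : p.Prime)
    (h : Upsilon (p * a) ≠ 0) : a.Prime := by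
  have hΩ := cardFactors_eq_two_of_Upsilon_ne_zero h
  have ha : a ≠ 0 := by
    rintro rfl
    simp at hΩ
  rw [cardFactors_mul hp.ne_zero ha, cardFactors_apply_prime hp] at hΩ
  exact cardFactors_eq_one_iff_prime.1 (by omega)

lemma Nat.Prime.Upsilon_mul_mul_Upsilon_mul_le {p a b : ℕ} (hp : p.Prime) :
    Upsilon (p * a) * Upsilon (p * b) ≤
      (Real.log (p * (a + b) : ℕ) / Real.log 2) ^ 2 * (Lambda0 a * Lambda0 b) := by
  set L := Real.log (p * (a + b) : ℕ)
  rcases eq_or_ne (Upsilon (p * a) * Upsilon (p * b)) 0 with h0 | h0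
  · rw [h0]
    exact mul_nonneg (sq_nonneg _) (mul_nonneg (Lambda0_nonneg a) (Lambda0_nonneg b))
  have ha := hp.prime_of_Upsilon_mul_ne_zero (left_ne_zero_of_mul h0)
  have hb := hp.prime_of_Upsilon_mul_ne_zero (right_ne_zero_of_mul h0)
  have hlog2 : 0 < Real.log 2 := Real.log_pos one_lt_two
  have hlog_le {q : ℕ} (hq : q.Prime) : Real.log 2 ≤ Real.log q :=
    Real.log_le_log two_pos (by exact_mod_cast hq.two_le)
  have hΥ : Upsilon (p * a) * Upsilon (p * b) ≤ L ^ 2 := by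
    rw [sq]
    exact mul_le_mul (Upsilon_le_log_of_le (by gcongr; omega))
      (Upsilon_le_log_of_le (by gcongr; omega)) (Upsilon_nonneg _)
      (Real.log_natCast_nonneg _)
  have hΛ : Real.log 2 ^ 2 ≤ Lambda0 a * Lambda0 b := by
    rw [Lambda0_of_prime ha, Lambda0_of_prime hb, sq]
    exact mul_le_mul (hlog_le ha) (hlog_le hb) hlog2.le (hlog2.le.trans (hlog_le ha))
  calc Upsilon (p * a) * Upsilon (p * b) ≤ L ^ 2 := hΥ
    _ = (L / Real.log 2) ^ 2 * Real.log 2 ^ 2 := by field_simp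
    _ ≤ (L / Real.log 2) ^ 2 * (Lambda0 a * Lambda0 b) := by gcongr

lemma Nat.Prime.Upsilon_mul_Upsilon_sub_le {N n p : ℕ} (hp : p.Prime) (hn : p ∣ n)
    (hNn : p ∣ N - n) (hle : n ≤ N) :
    Upsilon n * Upsilon (N - n) ≤
      (Real.log N / Real.log 2) ^ 2 * (Lambda0 (n / p) * Lambda0 (N / p - n / p)) := by
  obtain ⟨a, rfl⟩ := hn
  obtain ⟨b, hb⟩ := hNn
  obtain rfl : N = p * (a + b) := by rw [mul_add, ← hb]; omega
  rw [hb, Nat.mul_div_cancel_left _ hp.pos, Nat.mul_div_cancel_left _ hp.pos,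
    Nat.add_sub_cancel_left]
  exact hp.Upsilon_mul_mul_Upsilon_mul_le

lemma Nat.Prime.mk_div_mem_sigma_primeFactors {N n p : ℕ} (hp : p.Prime) (hn : p ∣ n)
    (hNn : p ∣ N - n) (hn0 : 0 < n) (hnN : n < N) :
    (⟨p, n / p⟩ : Σ _ : ℕ, ℕ) ∈ N.primeFactors.sigma fun q => Icc 1 (N / q - 1) := by
  obtain ⟨a, rfl⟩ := hn
  obtain ⟨b, hb⟩ := hNn
  obtain rfl : N = p * (a + b) := by rw [mul_add, ← hb]; omega
  have ha0 : 0 < a := pos_of_mul_pos_right hn0 (Nat.zero_le p)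
  have hb0 : 0 < b := Nat.pos_of_ne_zero (by rintro rfl; omega)
  simp only [mem_sigma, Nat.mem_primeFactors, mem_Icc, Nat.mul_div_cancel_left _ hp.pos]
  exact ⟨⟨hp, dvd_mul_right p _, mul_ne_zero hp.ne_zero (by omega)⟩, ha0, by omega⟩

lemma injOn_sigma_mk_div (q : ℕ → ℕ) :
    Set.InjOn (fun n => (⟨q n, n / q n⟩ : Σ _ : ℕ, ℕ)) {n | q n ∣ n} := by
  intro n₁ hn₁ n₂ hn₂ h
  obtain ⟨hq, hdiv⟩ := Sigma.mk.inj_iff.1 h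
  rw [← Nat.div_mul_cancel hn₁, ← Nat.div_mul_cancel hn₂, eq_of_heq hdiv, hq]

theorem upsilon_noncoprime_correlation_upper_bound_general (N : ℕ) :
    ∑ n ∈ (Finset.Icc 1 (N - 1)).filter (fun n => 1 < Nat.gcd n (N - n)),
        Upsilon n * Upsilon (N - n) ≤
      (Real.log N / Real.log 2) ^ 2 *
        ∑ p ∈ N.primeFactors, ∑ n ∈ Finset.Icc 1 (N / p - 1),
          Lambda0 n * Lambda0 (N / p - n) := by
  set S := (Icc 1 (N - 1)).filter fun n => 1 < n.gcd (N - n)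
  set C := (Real.log N / Real.log 2) ^ 2
  set q : ℕ → ℕ := fun n => (n.gcd (N - n)).minFac
  have hq : ∀ n ∈ S, (q n).Prime ∧ q n ∣ n ∧ q n ∣ N - n ∧ 0 < n ∧ n < N := by
    intro n hn
    simp only [S, mem_filter, mem_Icc] at hn
    exact ⟨Nat.minFac_prime hn.2.ne', (Nat.minFac_dvd _).trans (Nat.gcd_dvd_left _ _),
      (Nat.minFac_dvd _).trans (Nat.gcd_dvd_right _ _), by omega, by omega⟩
  rw [sum_sigma', mul_sum]
  calc ∑ n ∈ S, Upsilon n * Upsilon (N - n)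
      ≤ ∑ n ∈ S, C * (Lambda0 (n / q n) * Lambda0 (N / q n - n / q n)) :=
        sum_le_sum fun n hn => by
          obtain ⟨hp, hpn, hpNn, -, hnN⟩ := hq n hn
          exact hp.Upsilon_mul_Upsilon_sub_le hpn hpNn hnN.le
    _ ≤ _ :=
        sum_comp_le_sum_of_injOn
          (g := fun m : Σ _ : ℕ, ℕ => C * (Lambda0 m.2 * Lambda0 (N / m.1 - m.2)))
          ((injOn_sigma_mk_div q).mono fun n hn => (hq n hn).2.1)
          (fun n hn => by
            obtain ⟨hp, hpn, hpNn, hn0, hnN⟩ := hq n hn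
            exact hp.mk_div_mem_sigma_primeFactors hpn hpNn hn0 hnN)
          fun _ _ => mul_nonneg (sq_nonneg _) (mul_nonneg (Lambda0_nonneg _) (Lambda0_nonneg _))

/-- For every even `N > 6`,
`∑_{1 ≤ n ≤ N−1, gcd(n, N−n) > 1} Υ(n)·Υ(N−n)
  ≤ (log N / log 2)² · ∑_{p ∣ N prime} ∑_{1 ≤ n ≤ N/p−1} Λ₀(n)·Λ₀(N/p−n)`. -/
theorem upsilon_noncoprime_correlation_upper_bound (N : ℕ) (hN : Even N)
    (hN6 : 6 < N) :
    ∑ n ∈ (Finset.Icc 1 (N - 1)).filter (fun n => 1 < Nat.gcd n (N - n)),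
        Upsilon n * Upsilon (N - n) ≤
      (Real.log N / Real.log 2) ^ 2 *
        ∑ p ∈ N.primeFactors, ∑ n ∈ Finset.Icc 1 (N / p - 1),
          Lambda0 n * Lambda0 (N / p - n) :=
  upsilon_noncoprime_correlation_upper_bound_general N
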